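/- arXiv:2209.03931 — 2 statements merged into one kernel-verified Lean document; each statement's English description precedes it below -/
import Mathlib

section
/- For any connected graphs G and H, v_s(G)·v_s(H) ≤ Z(G □ H), where Z denotes the zero forcing number. -/
namespace PaperPD

open SimpleGraph

variable {V : Type} {W : Type}

/-- Observation process for power domination on a simple graph. -/
inductive Observed (G : SimpleGraph V) (S : Set V) : V → Prop
  | mem : ∀ v ∈ S, Observed G S v
  | dom : ∀ u v, u ∈ S → G.Adj u v → Observed G S v
  | prop : ∀ u v, Observed G S u → G.Adj u v →
      (∀ w, G.Adj u w → w ≠ v → Observed G S w) → Observed G S v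

/-- `S` is a power dominating set of `G`. -/
def IsPDS (G : SimpleGraph V) (S : Set V) : Prop := ∀ v, Observed G S v

/-- Power domination number. -/
noncomputable def pdNum (G : SimpleGraph V) [Fintype V] : ℕ :=
  sInf {n | ∃ S : Finset V, S.card = n ∧ IsPDS G ↑S}

/-- Zero forcing process. -/
inductive Forced (G : SimpleGraph V) (S : Set V) : V → Prop
  | mem : ∀ v ∈ S, Forced G S v
  | prop : ∀ u v, Forced G S u → G.Adj u v →
      (∀ w, G.Adj u w → w ≠ v → Forced G S w) → Forced G S v

/-- Zero forcing number. -/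
noncomputable def zNum (G : SimpleGraph V) [Fintype V] : ℕ :=
  sInf {n | ∃ S : Finset V, S.card = n ∧ ∀ v, Forced G S v}

/-- Domination number. -/
noncomputable def domNum (G : SimpleGraph V) [Fintype V] : ℕ :=
  sInf {n | ∃ S : Finset V, S.card = n ∧ ∀ v, ∃ u ∈ S, v = u ∨ G.Adj u v}

/-- No induced `K_{1,3}`. -/
def ClawFree (G : SimpleGraph V) : Prop :=
  ∀ x a b c : V, a ≠ b → a ≠ c → b ≠ c →
    G.Adj x a → G.Adj x b → G.Adj x c →
    ¬ G.Adj a b → ¬ G.Adj a c → ¬ G.Adj b c → False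

/-- No induced `K₄` minus an edge. -/
def DiamondFree (G : SimpleGraph V) : Prop :=
  ∀ a b c d : V, a ≠ b → a ≠ c → a ≠ d → b ≠ c → b ≠ d → c ≠ d →
    G.Adj a b → G.Adj a c → G.Adj b c → G.Adj b d → G.Adj c d →
    ¬ G.Adj a d → False

/-- A leaf: a vertex with exactly one neighbor. -/
def IsLeaf (G : SimpleGraph V) (v : V) : Prop := ∃! u, G.Adj v u

/-- A strong support vertex: adjacent to at least two leaves. -/
def IsStrongSupport (G : SimpleGraph V) (x : V) : Prop :=
  ∃ a b, a ≠ b ∧ G.Adj x a ∧ G.Adj x b ∧ IsLeaf G a ∧ IsLeaf G b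

/-- Number of strong support vertices. -/
noncomputable def ssCount (G : SimpleGraph V) : ℕ :=
  Nat.card {v // IsStrongSupport G v}

/-- Connected with no bridges. -/
def TwoEdgeConnected (G : SimpleGraph V) : Prop :=
  G.Connected ∧ ∀ e, ¬ G.IsBridge e

/-- A loopless multigraph, given by symmetric edge multiplicities. -/
structure Multigraph (W : Type) where
  mult : W → W → ℕ
  symm : ∀ u v, mult u v = mult v u
  loopless : ∀ v, mult v v = 0

/-- Underlying simple graph of a multigraph. -/
def Multigraph.toSimple (M : Multigraph W) : SimpleGraph W where
  Adj u v := u ≠ v ∧ 0 < M.mult u v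
  symm := ⟨by intro u v h; exact ⟨h.1.symm, by rw [M.symm]; exact h.2⟩⟩
  loopless := ⟨by intro v h; exact h.1 rfl⟩

/-- Degree of a vertex in a multigraph (counting multiplicities). -/
def Multigraph.degree [Fintype W] (M : Multigraph W) (v : W) : ℕ :=
  ∑ u, M.mult v u

/-- Bridgeless multigraph: no single edge is a cut edge (a parallel edge
is never a bridge). -/
def Multigraph.Bridgeless (M : Multigraph W) : Prop :=
  ∀ u v, M.mult u v = 1 → ¬ M.toSimple.IsBridge s(u, v)

/-- A 2-factor of a multigraph, given by sub-multiplicities. -/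
def Multigraph.IsTwoFactor [Fintype W] (M : Multigraph W) (f : W → W → ℕ) : Prop :=
  (∀ u v, f u v ≤ M.mult u v) ∧ (∀ u v, f u v = f v u) ∧ (∀ v, ∑ u, f v u = 2)

/-- Observation process for power domination on a multigraph: propagation
only happens along single edges. -/
inductive MObserved (M : Multigraph W) (S : Set W) : W → Prop
  | mem : ∀ v ∈ S, MObserved M S v
  | dom : ∀ u v, u ∈ S → 0 < M.mult u v → MObserved M S v
  | prop : ∀ u v, MObserved M S u → M.mult u v = 1 →
      (∀ w, 0 < M.mult u w → w ≠ v → MObserved M S w) → MObserved M S v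

/-- Power domination number of a multigraph. -/
noncomputable def mpdNum (M : Multigraph W) [Fintype W] : ℕ :=
  sInf {n | ∃ S : Finset W, S.card = n ∧ ∀ v, MObserved M ↑S v}

/-!
A fort of a graph is a nonempty vertex set `F` such that no vertex outside `F` has exactly one
neighbour in `F`. The first vertex of a fort to be coloured cannot have been forced, so every zero
forcing set meets every fort, and `Z(G)` is at least the number of pairwise disjoint forts.
The leaves hanging from a strong support vertex form a fort, a product of forts of `G` and `H` is a
fort of `G □ H`, and the products of leaf sets over pairs of strong support vertices are pairwise
disjoint because a leaf determines its support vertex.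
-/

open Function

def IsFort (G : SimpleGraph V) (F : Set V) : Prop :=
  F.Nonempty ∧ ∀ ⦃u v⦄, u ∉ F → v ∈ F → G.Adj u v → ∃ w ∈ F, w ≠ v ∧ G.Adj u w

theorem IsLeaf.eq_of_adj {G : SimpleGraph V} {p x u : V} (hp : IsLeaf G p)
    (hx : G.Adj x p) (hu : G.Adj u p) : u = x := by
  obtain ⟨z, -, hz⟩ := hp
  exact (hz u hu.symm).trans (hz x hx.symm).symm

theorem Forced.inter_nonempty_of_isFort {G : SimpleGraph V} {S F : Set V} {v : V}
    (hv : Forced G S v) (hF : IsFort G F) (hvF : v ∈ F) : (S ∩ F).Nonempty := by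
  induction hv with
  | mem v hvS => exact ⟨v, hvS, hvF⟩
  | prop u v _ huv _ ihu ihw =>
    by_cases huF : u ∈ F
    · exact ihu huF
    · obtain ⟨w, hwF, hwv, huw⟩ := hF.2 huF hvF huv
      exact ihw w huw hwv hwF

theorem IsFort.inter_nonempty {G : SimpleGraph V} {S F : Set V} (hF : IsFort G F)
    (hS : ∀ v, Forced G S v) : (S ∩ F).Nonempty :=
  let ⟨v, hvF⟩ := hF.1
  (hS v).inter_nonempty_of_isFort hF hvF

theorem IsFort.boxProd {G : SimpleGraph V} {H : SimpleGraph W} {A : Set V} {B : Set W}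
    (hA : IsFort G A) (hB : IsFort H B) : IsFort (G □ H) (A ×ˢ B) := by
  refine ⟨hA.1.prod hB.1, ?_⟩
  rintro ⟨u₁, u₂⟩ ⟨v₁, v₂⟩ hu ⟨hv₁, hv₂⟩ huv
  rcases boxProd_adj.mp huv with ⟨h₁, rfl⟩ | ⟨h₂, rfl⟩
  · obtain ⟨w, hw, hwv, huw⟩ := hA.2 (fun h => hu ⟨h, hv₂⟩) hv₁ h₁
    exact ⟨(w, u₂), ⟨hw, hv₂⟩, by simpa using hwv, boxProd_adj_left.mpr huw⟩
  · obtain ⟨w, hw, hwv, huw⟩ := hB.2 (fun h => hu ⟨hv₁, h⟩) hv₂ h₂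
    exact ⟨(u₁, w), ⟨hv₁, hw⟩, by simpa using hwv, boxProd_adj_right.mpr huw⟩

def leavesAt (G : SimpleGraph V) (x : V) : Set V := {a | G.Adj x a ∧ IsLeaf G a}

theorem eq_of_mem_leavesAt {G : SimpleGraph V} {x x' a : V} (h : a ∈ leavesAt G x)
    (h' : a ∈ leavesAt G x') : x = x' :=
  h.2.eq_of_adj h'.1 h.1

/-- The only outside neighbour of these leaves is the support vertex, which sees two of them. -/
theorem isFort_leavesAt {G : SimpleGraph V} {x : V} (hx : IsStrongSupport G x) :
    IsFort G (leavesAt G x) := by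
  obtain ⟨a, b, hab, hxa, hxb, ha, hb⟩ := hx
  refine ⟨⟨a, hxa, ha⟩, ?_⟩
  rintro u v - ⟨hxv, hv⟩ huv
  obtain rfl := hv.eq_of_adj hxv huv
  by_cases hva : v = a
  · exact ⟨b, ⟨hxb, hb⟩, by rintro rfl; exact hab hva.symm, hxb⟩
  · exact ⟨a, ⟨hxa, ha⟩, Ne.symm hva, hxa⟩

theorem exists_card_eq_zNum (G : SimpleGraph V) [Fintype V] :
    ∃ S : Finset V, S.card = zNum G ∧ ∀ v, Forced G S v :=
  Nat.sInf_mem (s := {n | ∃ S : Finset V, S.card = n ∧ ∀ v, Forced G S v})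
    ⟨_, Finset.univ, rfl, fun v => Forced.mem v (Finset.mem_coe.mpr (Finset.mem_univ v))⟩

theorem card_le_zNum_of_pairwise_disjoint {ι : Type*} (G : SimpleGraph V) [Fintype V]
    (F : ι → Set V) (hF : ∀ i, IsFort G (F i)) (hdisj : Pairwise (Disjoint on F)) :
    Nat.card ι ≤ zNum G := by
  obtain ⟨S, hS, hforced⟩ := exists_card_eq_zNum G
  choose s hsS hsF using fun i => (hF i).inter_nonempty hforced
  have hs : Injective fun i => (⟨s i, hsS i⟩ : S) := fun i j hij => by
    by_contra hne
    have hsij : s i = s j := congrArg Subtype.val hij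
    exact Set.disjoint_left.mp (hdisj hne) (hsF i) (hsij ▸ hsF j)
  calc Nat.card ι ≤ Nat.card S := Nat.card_le_card_of_injective _ hs
    _ = zNum G := by rw [Nat.card_eq_fintype_card, Fintype.card_coe, hS]

theorem stmt12_general {V W : Type} [Fintype V] [Fintype W]
    (G : SimpleGraph V) (H : SimpleGraph W) :
    ssCount G * ssCount H ≤ zNum (G.boxProd H) := by
  let F (i : {x // IsStrongSupport G x} × {y // IsStrongSupport H y}) : Set (V × W) :=
    leavesAt G i.1 ×ˢ leavesAt H i.2
  have hdisj : Pairwise (Disjoint on F) := by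
    rintro ⟨x, y⟩ ⟨x', y'⟩ hne
    refine Set.disjoint_left.mpr ?_
    rintro ⟨p, q⟩ ⟨hp, hq⟩ ⟨hp', hq'⟩
    exact hne <| Prod.ext (Subtype.ext (eq_of_mem_leavesAt hp hp'))
      (Subtype.ext (eq_of_mem_leavesAt hq hq'))
  calc ssCount G * ssCount H
      = Nat.card ({x // IsStrongSupport G x} × {y // IsStrongSupport H y}) :=
        (Nat.card_prod _ _).symm
    _ ≤ zNum (G.boxProd H) := card_le_zNum_of_pairwise_disjoint _ F
        (fun i => (isFort_leavesAt i.1.2).boxProd (isFort_leavesAt i.2.2)) hdisj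

theorem stmt12 {V W : Type} [Fintype V] [Fintype W]
    (G : SimpleGraph V) (H : SimpleGraph W)
    (hG : G.Connected) (hH : H.Connected) :
    ssCount G * ssCount H ≤ zNum (G.boxProd H) :=
  stmt12_general G H

end PaperPD
end

section
/- For any connected graphs G and H, γ_P(G □ H) ≤ min{γ(G)·Z(H), γ(H)·Z(G)}. -/
namespace PaperPD

open SimpleGraph

variable {V : Type} {W : Type}

/-!
If `D` dominates `G` and `B` is a zero forcing set of `H`, then `D ×ˢ B` power dominates
`G □ H`. The domination step observes every vertex of `V ×ˢ B`. A force `u → v` in `H` then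
lifts to the force `(g, u) → (g, v)` in every `H`-fibre: the other neighbours of `(g, u)` are
either `(g', u)`, observed because `u` itself is forced, or `(g, w)` with `w` forced before `v`.
Exchanging the factors through `G □ H ≃g H □ G` gives the other bound.
-/

theorem Observed.map {G : SimpleGraph V} {G' : SimpleGraph W} (e : G ≃g G') {S : Set V} {v : V}
    (h : Observed G S v) : Observed G' (e '' S) (e v) := by
  induction h with
  | mem v hv => exact .mem _ ⟨v, hv, rfl⟩
  | dom u v hu hadj => exact .dom (e u) (e v) ⟨u, hu, rfl⟩ (e.map_adj_iff.mpr hadj)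
  | prop u v _ hadj _ ihu ihw =>
    refine .prop (e u) (e v) ihu (e.map_adj_iff.mpr hadj) fun w' hw' hne => ?_
    rw [← e.apply_symm_apply w'] at hw' hne ⊢
    exact ihw _ (e.map_adj_iff.mp hw') (ne_of_apply_ne e hne)

theorem IsPDS.map {G : SimpleGraph V} {G' : SimpleGraph W} (e : G ≃g G') {S : Set V}
    (h : IsPDS G S) : IsPDS G' (e '' S) := fun v =>
  e.apply_symm_apply v ▸ (h (e.symm v)).map e

theorem Forced.observed_boxProd {G : SimpleGraph V} {H : SimpleGraph W} {D : Set V} {B : Set W}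
    (hD : ∀ v, ∃ u ∈ D, v = u ∨ G.Adj u v) {w : W} (hw : Forced H B w) (g : V) :
    Observed (G □ H) (D ×ˢ B) (g, w) := by
  induction hw generalizing g with
  | mem w hw =>
    obtain ⟨d, hd, rfl | hadj⟩ := hD g
    · exact .mem _ ⟨hd, hw⟩
    · exact .dom (d, w) (g, w) ⟨hd, hw⟩ (boxProd_adj_left.mpr hadj)
  | prop u v _ hadj _ ihu ihw =>
    refine .prop (g, u) (g, v) (ihu g) (boxProd_adj_right.mpr hadj) ?_
    rintro ⟨g', w'⟩ (⟨-, rfl⟩ | ⟨hw', rfl⟩) hne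
    · exact ihu g'
    · exact ihw w' hw' (fun h => hne (h ▸ rfl)) g

theorem isPDS_boxProd_prod {G : SimpleGraph V} {H : SimpleGraph W} {D : Set V} {B : Set W}
    (hD : ∀ v, ∃ u ∈ D, v = u ∨ G.Adj u v) (hB : ∀ w, Forced H B w) :
    IsPDS (G □ H) (D ×ˢ B) := fun x =>
  (hB x.2).observed_boxProd hD x.1

section Numbers

variable [Fintype V] [Fintype W]

theorem pdNum_le_card {G : SimpleGraph V} {S : Finset V} (h : IsPDS G S) : pdNum G ≤ S.card :=
  Nat.sInf_le ⟨S, rfl, h⟩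

theorem exists_card_eq_sInf_card {P : Finset V → Prop} (huniv : P Finset.univ) :
    ∃ S : Finset V, S.card = sInf {n | ∃ S : Finset V, S.card = n ∧ P S} ∧ P S :=
  Nat.sInf_mem (s := {n | ∃ S : Finset V, S.card = n ∧ P S}) ⟨_, Finset.univ, rfl, huniv⟩

theorem exists_isPDS_card_eq_pdNum (G : SimpleGraph V) :
    ∃ S : Finset V, S.card = pdNum G ∧ IsPDS G S :=
  exists_card_eq_sInf_card fun v => .mem v (by simp)

theorem exists_dominating_card_eq_domNum (G : SimpleGraph V) :
    ∃ D : Finset V, D.card = domNum G ∧ ∀ v, ∃ u ∈ D, v = u ∨ G.Adj u v :=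
  exists_card_eq_sInf_card fun v => ⟨v, Finset.mem_univ v, .inl rfl⟩

theorem exists_forcing_card_eq_zNum (G : SimpleGraph V) :
    ∃ B : Finset V, B.card = zNum G ∧ ∀ v, Forced G B v :=
  exists_card_eq_sInf_card fun v => .mem v (by simp)

theorem pdNum_le_of_iso {G : SimpleGraph V} {G' : SimpleGraph W} (e : G ≃g G') :
    pdNum G' ≤ pdNum G := by
  obtain ⟨S, hcard, hS⟩ := exists_isPDS_card_eq_pdNum G
  calc pdNum G' ≤ (S.map e.toEquiv.toEmbedding).card :=
        pdNum_le_card (by rw [Finset.coe_map]; exact hS.map e)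
    _ = pdNum G := by rw [Finset.card_map, hcard]

theorem pdNum_congr {G : SimpleGraph V} {G' : SimpleGraph W} (e : G ≃g G') :
    pdNum G = pdNum G' :=
  le_antisymm (pdNum_le_of_iso e.symm) (pdNum_le_of_iso e)

theorem pdNum_boxProd_le_domNum_mul_zNum (G : SimpleGraph V) (H : SimpleGraph W) :
    pdNum (G □ H) ≤ domNum G * zNum H := by
  obtain ⟨D, hDcard, hD⟩ := exists_dominating_card_eq_domNum G
  obtain ⟨B, hBcard, hB⟩ := exists_forcing_card_eq_zNum H
  calc pdNum (G □ H) ≤ (D ×ˢ B).card :=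
        pdNum_le_card (by rw [Finset.coe_product]; exact isPDS_boxProd_prod hD hB)
    _ = domNum G * zNum H := by rw [Finset.card_product, hDcard, hBcard]

end Numbers

theorem stmt13_general {V W : Type} [Fintype V] [Fintype W]
    (G : SimpleGraph V) (H : SimpleGraph W) :
    pdNum (G.boxProd H) ≤ min (domNum G * zNum H) (domNum H * zNum G) := by
  refine le_min (pdNum_boxProd_le_domNum_mul_zNum G H) ?_
  rw [pdNum_congr (boxProdComm G H)]
  exact pdNum_boxProd_le_domNum_mul_zNum H G

theorem stmt13 {V W : Type} [Fintype V] [Fintype W]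
    (G : SimpleGraph V) (H : SimpleGraph W)
    (hG : G.Connected) (hH : H.Connected) :
    pdNum (G.boxProd H) ≤ min (domNum G * zNum H) (domNum H * zNum G) :=
  stmt13_general G H

end PaperPD
end
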